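/- Let Ω have finite measure, p ∈ (0,1), ε_k ↓ 0, and let (u_k), (v_k) ⊂ L²(Ω) satisfy: u_k → ū and v_k → ū a.e. with a common L² dominating function, ∫_Ω ψ'_{ε_k}(u_k²)·u_k² dx → (p/2)∫_Ω |ū|^p dx, and ∫_Ω ψ'_{ε_k}(u_k²)(v_k − u_k)² dx → 0. Then 2∫_Ω ψ'_{ε_k}(u_k²)·v_k² dx → p∫_Ω |ū|^p dx. -/

import Mathlib

open Set MeasureTheory Filter Topology
open scoped ENNReal

/-!
Write `v_k = u_k + (v_k - u_k)` and expand the square: with `A_k`, `B_k` the integrals in the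
two hypotheses and `C_k = ∫ ψ'_{ε_k}(u_k²) u_k (v_k - u_k)`, the integral in the conclusion is
`A_k + 2 C_k + B_k`. The weight is nonnegative and bounded, so Cauchy–Schwarz gives
`C_k² ≤ A_k B_k → 0`, and the limit is that of `A_k`.
-/

noncomputable def psiSmDeriv (p ε t : ℝ) : ℝ :=
  if t = 0 then (p / 2) * ε ^ (p - 2) else (p / 2) * min (ε ^ (p - 2)) (t ^ ((p - 2) / 2))

section WeightedL2

variable {α : Type*} [MeasurableSpace α] {μ : Measure α} {g f h : α → ℝ}

lemma integrable_weight_mul_mul (hg : MemLp g ∞ μ) (hf : MemLp f 2 μ) (hh : MemLp h 2 μ) :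
    Integrable (fun x => g x * (f x * h x)) μ :=
  (hf.integrable_mul hh).mul_of_top_right hg

lemma integral_weight_mul_add_sq (hg : MemLp g ∞ μ) (hf : MemLp f 2 μ) (hh : MemLp h 2 μ) :
    ∫ x, g x * (f x + h x) ^ 2 ∂μ =
      ∫ x, g x * f x ^ 2 ∂μ + 2 * ∫ x, g x * (f x * h x) ∂μ + ∫ x, g x * h x ^ 2 ∂μ := by
  have hff := integrable_weight_mul_mul hg hf hf
  have hfh := integrable_weight_mul_mul hg hf hh
  have hhh := integrable_weight_mul_mul hg hh hh
  simp only [← sq] at hff hhh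
  rw [← integral_const_mul, ← integral_add hff (hfh.const_mul 2), ← integral_add (by fun_prop) hhh]
  congr 1 with x
  ring

lemma sq_integral_weight_mul_le (hg0 : 0 ≤ᵐ[μ] g) (hg : MemLp g ∞ μ) (hf : MemLp f 2 μ)
    (hh : MemLp h 2 μ) :
    (∫ x, g x * (f x * h x) ∂μ) ^ 2 ≤ (∫ x, g x * f x ^ 2 ∂μ) * ∫ x, g x * h x ^ 2 ∂μ := by
  have hquad : ∀ t : ℝ, 0 ≤ (∫ x, g x * h x ^ 2 ∂μ) * (t * t)
      + 2 * (∫ x, g x * (f x * h x) ∂μ) * t + ∫ x, g x * f x ^ 2 ∂μ := by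
    intro t
    have h_nonneg : 0 ≤ ∫ x, g x * (f x + t * h x) ^ 2 ∂μ :=
      integral_nonneg_of_ae <| hg0.mono fun x hx => mul_nonneg hx (sq_nonneg _)
    rw [integral_weight_mul_add_sq hg hf (hh.const_mul t)] at h_nonneg
    simp_rw [show ∀ x, g x * (f x * (t * h x)) = t * (g x * (f x * h x)) from fun x => by ring,
      show ∀ x, g x * (t * h x) ^ 2 = t ^ 2 * (g x * h x ^ 2) from fun x => by ring,
      integral_const_mul] at h_nonneg
    linarith
  have hdiscrim := discrim_le_zero hquad
  rw [discrim] at hdiscrim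
  nlinarith

end WeightedL2

lemma tendsto_zero_of_sq_le_mul {ι : Type*} {l : Filter ι} {A B C : ι → ℝ} {a : ℝ}
    (hA : Tendsto A l (𝓝 a)) (hB : Tendsto B l (𝓝 0)) (hC : ∀ i, C i ^ 2 ≤ A i * B i) :
    Tendsto C l (𝓝 0) := by
  have hC_sq : Tendsto (fun i => C i ^ 2) l (𝓝 0) :=
    squeeze_zero (fun i => sq_nonneg _) hC (by simpa using hA.mul hB)
  have hC_abs := hC_sq.sqrt
  simp only [Real.sqrt_sq_eq_abs, Real.sqrt_zero] at hC_abs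
  exact (tendsto_zero_iff_abs_tendsto_zero C).2 hC_abs

section psiSmDeriv

variable {p ε : ℝ}

lemma measurable_psiSmDeriv : Measurable (psiSmDeriv p ε) :=
  Measurable.ite (measurableSet_singleton 0) measurable_const
    ((measurable_const.min (measurable_id.pow_const _)).const_mul _)

lemma psiSmDeriv_nonneg (hp : 0 ≤ p) (hε : 0 ≤ ε) {t : ℝ} (ht : 0 ≤ t) :
    0 ≤ psiSmDeriv p ε t := by
  unfold psiSmDeriv
  split_ifs
  · positivity
  · exact mul_nonneg (by positivity) (le_min (by positivity) (by positivity))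

lemma psiSmDeriv_le (hp : 0 ≤ p) (t : ℝ) : psiSmDeriv p ε t ≤ p / 2 * ε ^ (p - 2) := by
  unfold psiSmDeriv
  split_ifs
  · rfl
  · exact mul_le_mul_of_nonneg_left (min_le_left _ _) (by positivity)

lemma memLp_top_psiSmDeriv_comp_sq {α : Type*} [MeasurableSpace α] {μ : Measure α} {f : α → ℝ}
    (hp : 0 ≤ p) (hε : 0 ≤ ε) (hf : AEStronglyMeasurable f μ) :
    MemLp (fun x => psiSmDeriv p ε (f x ^ 2)) ∞ μ := by
  have hmeas :=
    (measurable_psiSmDeriv (p := p) (ε := ε)).comp_aemeasurable (hf.aemeasurable.pow_const 2)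
  refine memLp_top_of_bound hmeas.aestronglyMeasurable (p / 2 * ε ^ (p - 2))
    (Eventually.of_forall fun x => ?_)
  rw [Real.norm_of_nonneg (psiSmDeriv_nonneg hp hε (sq_nonneg _))]
  exact psiSmDeriv_le hp _

end psiSmDeriv

theorem stmt17_general (d : ℕ) (Ω : Set (Fin d → ℝ))
    (p : ℝ) (hp : 0 < p)
    (ε : ℕ → ℝ) (hεpos : ∀ k, 0 < ε k)
    (u v : ℕ → (Fin d → ℝ) → ℝ) (ubar : (Fin d → ℝ) → ℝ)
    (hmemu : ∀ k, MemLp (u k) 2 (volume.restrict Ω))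
    (hmemv : ∀ k, MemLp (v k) 2 (volume.restrict Ω))
    (h1 : Tendsto (fun k => ∫ x in Ω, psiSmDeriv p (ε k) ((u k x) ^ 2) * (u k x) ^ 2)
      atTop (nhds ((p / 2) * ∫ x in Ω, |ubar x| ^ p)))
    (h2 : Tendsto (fun k => ∫ x in Ω, psiSmDeriv p (ε k) ((u k x) ^ 2) * (v k x - u k x) ^ 2)
      atTop (nhds 0)) :
    Tendsto (fun k => 2 * ∫ x in Ω, psiSmDeriv p (ε k) ((u k x) ^ 2) * (v k x) ^ 2)
      atTop (nhds (p * ∫ x in Ω, |ubar x| ^ p)) := by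
  have hweight k := memLp_top_psiSmDeriv_comp_sq hp.le (hεpos k).le (hmemu k).1
  have hweight_nonneg k : ∀ᵐ x ∂(volume.restrict Ω), 0 ≤ psiSmDeriv p (ε k) (u k x ^ 2) :=
    Eventually.of_forall fun x => psiSmDeriv_nonneg hp.le (hεpos k).le (sq_nonneg _)
  have hdiff k := (hmemv k).sub (hmemu k)
  have hcross := tendsto_zero_of_sq_le_mul h1 h2 fun k =>
    sq_integral_weight_mul_le (hweight_nonneg k) (hweight k) (hmemu k) (hdiff k)
  have hsplit k := integral_weight_mul_add_sq (hweight k) (hmemu k) (hdiff k)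
  simp only [Pi.sub_apply, add_sub_cancel] at hsplit
  simp_rw [hsplit]
  convert ((h1.add (hcross.const_mul 2)).add h2).const_mul 2 using 2
  ring

theorem stmt17 (d : ℕ) (Ω : Set (Fin d → ℝ)) (hΩ : MeasurableSet Ω)
    (hfin : volume Ω < ⊤) (p : ℝ) (hp : 0 < p) (hp1 : p < 1)
    (ε : ℕ → ℝ) (hεpos : ∀ k, 0 < ε k) (hεanti : Antitone ε)
    (hεlim : Tendsto ε atTop (nhds 0))
    (u v : ℕ → (Fin d → ℝ) → ℝ) (ubar w : (Fin d → ℝ) → ℝ)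
    (hmemu : ∀ k, MemLp (u k) 2 (volume.restrict Ω))
    (hmemv : ∀ k, MemLp (v k) 2 (volume.restrict Ω))
    (haeu : ∀ᵐ x ∂(volume.restrict Ω), Tendsto (fun k => u k x) atTop (nhds (ubar x)))
    (haev : ∀ᵐ x ∂(volume.restrict Ω), Tendsto (fun k => v k x) atTop (nhds (ubar x)))
    (hdomu : ∀ k, ∀ᵐ x ∂(volume.restrict Ω), |u k x| ≤ w x)
    (hdomv : ∀ k, ∀ᵐ x ∂(volume.restrict Ω), |v k x| ≤ w x)
    (hw : MemLp w 2 (volume.restrict Ω))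
    (h1 : Tendsto (fun k => ∫ x in Ω, psiSmDeriv p (ε k) ((u k x) ^ 2) * (u k x) ^ 2)
      atTop (nhds ((p / 2) * ∫ x in Ω, |ubar x| ^ p)))
    (h2 : Tendsto (fun k => ∫ x in Ω, psiSmDeriv p (ε k) ((u k x) ^ 2) * (v k x - u k x) ^ 2)
      atTop (nhds 0)) :
    Tendsto (fun k => 2 * ∫ x in Ω, psiSmDeriv p (ε k) ((u k x) ^ 2) * (v k x) ^ 2)
      atTop (nhds (p * ∫ x in Ω, |ubar x| ^ p)) :=
  stmt17_general d Ω p hp ε hεpos u v ubar hmemu hmemv h1 h2
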